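/- arXiv:2410.05171 — 2 statements merged into one kernel-verified Lean document; each statement's English description precedes it below -/
import Mathlib

section
/- Residual error of the Shadow decoder for confined codes (Lemma 2): Let H ∈ 𝔽₂^{m×n} and A ∈ 𝔽₂^{a×n} with H·Aᵀ = 0, and assume H is (t,f)-confined relative to A with f : ℕ → ℝ monotone increasing. Let e ∈ 𝔽₂ⁿ with ‖e‖_A ≤ t/2 and let s_e ∈ 𝔽₂^m be arbitrary. Let ŝ ∈ 𝔽₂^m be any vector of minimum Hamming weight among those for which there exists e′ ∈ 𝔽₂ⁿ with ‖e′‖_A ≤ t/2 and He′ = He + s_e + ŝ, and let ê ∈ 𝔽₂ⁿ be any vector of minimum Hamming weight with Hê = He + s_e + ŝ. Then ‖e + ê‖_A ≤ f(2|s_e|). -/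
open Matrix Kronecker

/-- The row space of a matrix over 𝔽₂: the span of its rows. -/
def rowSpace {m n : Type*} (A : Matrix m n (ZMod 2)) :
    Submodule (ZMod 2) (n → ZMod 2) :=
  Submodule.span (ZMod 2) (Set.range A)

/-- The reduced weight of a vector `v` relative to a matrix `A`:
`‖v‖_A = min { |v+u| : u ∈ rs(A) }`. -/
noncomputable def redW {m n : Type*} [Fintype n] (A : Matrix m n (ZMod 2))
    (v : n → ZMod 2) : ℕ :=
  sInf {k | ∃ u ∈ rowSpace A, hammingNorm (v + u) = k}

/-- `H` is `(t,f)`-sound relative to `A`. -/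
def Sound {m n a : Type*} [Fintype m] [Fintype n] (t : ℕ) (f : ℕ → ℝ)
    (H : Matrix m n (ZMod 2)) (A : Matrix a n (ZMod 2)) : Prop :=
  ∀ s : m → ZMod 2, (∃ e, H.mulVec e = s) → hammingNorm s ≤ t →
    ∃ e, H.mulVec e = s ∧ (redW A e : ℝ) ≤ f (hammingNorm s)

/-- `H` is `(t,f)`-confined relative to `A`. -/
def Confined {m n a : Type*} [Fintype m] [Fintype n] (t : ℕ) (f : ℕ → ℝ)
    (H : Matrix m n (ZMod 2)) (A : Matrix a n (ZMod 2)) : Prop :=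
  ∀ e : n → ZMod 2, redW A e ≤ t → (redW A e : ℝ) ≤ f (hammingNorm (H.mulVec e))

/-- Parity-check matrix of the length-`ℓ` repetition code. -/
def repH (ℓ : ℕ) : Matrix (Fin (ℓ - 1)) (Fin ℓ) (ZMod 2) :=
  Matrix.of fun j i => if i.val = j.val ∨ i.val = j.val + 1 then 1 else 0

/-- Thickened X-check matrix `H̃_X = ( H_X⊗I_ℓ | I_{m_X}⊗hᵀ )`. -/
def thickHX {mX n : ℕ} (HX : Matrix (Fin mX) (Fin n) (ZMod 2)) (ℓ : ℕ) :
    Matrix (Fin mX × Fin ℓ) ((Fin n × Fin ℓ) ⊕ (Fin mX × Fin (ℓ - 1))) (ZMod 2) :=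
  Matrix.fromCols (HX ⊗ₖ (1 : Matrix (Fin ℓ) (Fin ℓ) (ZMod 2)))
    ((1 : Matrix (Fin mX) (Fin mX) (ZMod 2)) ⊗ₖ (repH ℓ)ᵀ)

/-- Thickened Z-check matrix `H̃_Z = [[ H_Z⊗I_ℓ , 0 ],[ I_n⊗h , H_Xᵀ⊗I_{ℓ−1} ]]`. -/
def thickHZ {mX mZ n : ℕ} (HX : Matrix (Fin mX) (Fin n) (ZMod 2))
    (HZ : Matrix (Fin mZ) (Fin n) (ZMod 2)) (ℓ : ℕ) :
    Matrix ((Fin mZ × Fin ℓ) ⊕ (Fin n × Fin (ℓ - 1)))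
      ((Fin n × Fin ℓ) ⊕ (Fin mX × Fin (ℓ - 1))) (ZMod 2) :=
  Matrix.fromBlocks (HZ ⊗ₖ (1 : Matrix (Fin ℓ) (Fin ℓ) (ZMod 2))) 0
    ((1 : Matrix (Fin n) (Fin n) (ZMod 2)) ⊗ₖ repH ℓ)
    (HXᵀ ⊗ₖ (1 : Matrix (Fin (ℓ - 1)) (Fin (ℓ - 1)) (ZMod 2)))

/-- Metacheck matrix `M̃_Z = ( I_{m_Z}⊗h | H_Z⊗I_{ℓ−1} )`. -/
def metaMZ {mZ n : ℕ} (HZ : Matrix (Fin mZ) (Fin n) (ZMod 2)) (ℓ : ℕ) :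
    Matrix (Fin mZ × Fin (ℓ - 1))
      ((Fin mZ × Fin ℓ) ⊕ (Fin n × Fin (ℓ - 1))) (ZMod 2) :=
  Matrix.fromCols ((1 : Matrix (Fin mZ) (Fin mZ) (ZMod 2)) ⊗ₖ repH ℓ)
    (HZ ⊗ₖ (1 : Matrix (Fin (ℓ - 1)) (Fin (ℓ - 1)) (ZMod 2)))

/-- Sheet-`τ` component of a vector on the thickened qubit space. -/
def sheet {n ℓ mX : ℕ} (τ : Fin ℓ)
    (v : (Fin n × Fin ℓ) ⊕ (Fin mX × Fin (ℓ - 1)) → ZMod 2) : Fin n → ZMod 2 :=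
  fun i => v (Sum.inl (i, τ))

/-!
Since `H` annihilates `rs(A)`, the witness `e′` for `ŝ` can be replaced by a reduced
representative `e′ + u` with the same syndrome and weight `‖e′‖_A ≤ t/2`; minimality of `ê`
then gives `‖ê‖_A ≤ |ê| ≤ t/2`, so `‖e + ê‖_A ≤ t` and confinement applies to `e + ê`.
Its syndrome is `s_e + ŝ`, and `|ŝ| ≤ |s_e|` because `e` itself witnesses the candidate `s_e`.
-/

theorem hammingNorm_add_le {ι : Type*} [Fintype ι] {β : ι → Type*} [∀ i, AddGroup (β i)]
    [∀ i, DecidableEq (β i)] (x y : ∀ i, β i) :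
    hammingNorm (x + y) ≤ hammingNorm x + hammingNorm y :=
  calc hammingNorm (x + y) = hammingDist (-x) y := by rw [hammingDist_eq_hammingNorm, neg_neg]
    _ ≤ hammingDist (-x) 0 + hammingDist 0 y := hammingDist_triangle _ _ _
    _ = hammingNorm x + hammingNorm y := by
        rw [hammingDist_eq_hammingNorm, hammingDist_eq_hammingNorm, neg_neg, neg_zero, add_zero,
          zero_add]

section redW

variable {m n : Type*} [Fintype n] (A : Matrix m n (ZMod 2))

theorem exists_mem_rowSpace_hammingNorm_add_eq_redW (v : n → ZMod 2) :
    ∃ u ∈ rowSpace A, hammingNorm (v + u) = redW A v :=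
  Nat.sInf_mem (s := {k | ∃ u ∈ rowSpace A, hammingNorm (v + u) = k})
    ⟨_, 0, (rowSpace A).zero_mem, rfl⟩

theorem redW_le_hammingNorm_add {v u : n → ZMod 2} (hu : u ∈ rowSpace A) :
    redW A v ≤ hammingNorm (v + u) :=
  Nat.sInf_le ⟨u, hu, rfl⟩

theorem redW_le_hammingNorm (v : n → ZMod 2) : redW A v ≤ hammingNorm v := by
  simpa using redW_le_hammingNorm_add A (v := v) (rowSpace A).zero_mem

theorem redW_add_le (v w : n → ZMod 2) : redW A (v + w) ≤ redW A v + redW A w := by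
  obtain ⟨u, hu, hvu⟩ := exists_mem_rowSpace_hammingNorm_add_eq_redW A v
  obtain ⟨u', hu', hwu'⟩ := exists_mem_rowSpace_hammingNorm_add_eq_redW A w
  calc redW A (v + w) ≤ hammingNorm (v + w + (u + u')) :=
        redW_le_hammingNorm_add A ((rowSpace A).add_mem hu hu')
    _ = hammingNorm ((v + u) + (w + u')) := by rw [add_add_add_comm]
    _ ≤ hammingNorm (v + u) + hammingNorm (w + u') := hammingNorm_add_le _ _
    _ = redW A v + redW A w := by rw [hvu, hwu']

variable {k : Type*} {H : Matrix k n (ZMod 2)}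

theorem mulVec_eq_zero_of_mem_rowSpace (hHA : H * Aᵀ = 0) {u : n → ZMod 2}
    (hu : u ∈ rowSpace A) : H *ᵥ u = 0 := by
  refine Submodule.span_le (p := LinearMap.ker H.mulVecLin).mpr ?_ hu
  rintro _ ⟨i, rfl⟩
  ext j
  simpa [Matrix.mulVec, dotProduct, Matrix.mul_apply] using congrFun (congrFun hHA j) i

theorem hammingNorm_le_redW_of_forall_mulVec_eq (hHA : H * Aᵀ = 0) {s : k → ZMod 2}
    {x y : n → ZMod 2} (hy : ∀ z, H *ᵥ z = s → hammingNorm y ≤ hammingNorm z)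
    (hx : H *ᵥ x = s) : hammingNorm y ≤ redW A x := by
  obtain ⟨u, hu, hxu⟩ := exists_mem_rowSpace_hammingNorm_add_eq_redW A x
  rw [← hxu]
  exact hy (x + u) (by rw [mulVec_add, mulVec_eq_zero_of_mem_rowSpace A hHA hu, add_zero, hx])

end redW

theorem shadow_decoder_residual_general
    {m n a : ℕ}
    (H : Matrix (Fin m) (Fin n) (ZMod 2))
    (A : Matrix (Fin a) (Fin n) (ZMod 2))
    (hHA : H * Aᵀ = 0)
    (t : ℕ) (f : ℕ → ℝ) (hf : Monotone f)
    (hconf : Confined t f H A)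
    (e : Fin n → ZMod 2) (he : (redW A e : ℝ) ≤ (t : ℝ) / 2)
    (se : Fin m → ZMod 2)
    (shat : Fin m → ZMod 2)
    (hshat_ex : ∃ e', (redW A e' : ℝ) ≤ (t : ℝ) / 2 ∧
      H.mulVec e' = H.mulVec e + se + shat)
    (hshat_min : ∀ s' : Fin m → ZMod 2,
      (∃ e', (redW A e' : ℝ) ≤ (t : ℝ) / 2 ∧ H.mulVec e' = H.mulVec e + se + s') →
      hammingNorm shat ≤ hammingNorm s')
    (ehat : Fin n → ZMod 2)
    (hehat : H.mulVec ehat = H.mulVec e + se + shat)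
    (hehat_min : ∀ e' : Fin n → ZMod 2,
      H.mulVec e' = H.mulVec e + se + shat → hammingNorm ehat ≤ hammingNorm e') :
    (redW A (e + ehat) : ℝ) ≤ f (2 * hammingNorm se) := by
  obtain ⟨e', he', hse'⟩ := hshat_ex
  have hehat_le : (redW A ehat : ℝ) ≤ t / 2 := by
    have := (redW_le_hammingNorm A ehat).trans
      (hammingNorm_le_redW_of_forall_mulVec_eq A hHA hehat_min hse')
    exact (Nat.cast_le.mpr this).trans he'
  have hsum : redW A (e + ehat) ≤ t := by
    have : (redW A (e + ehat) : ℝ) ≤ t :=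
      calc (redW A (e + ehat) : ℝ) ≤ redW A e + redW A ehat := mod_cast redW_add_le A e ehat
        _ ≤ t / 2 + t / 2 := add_le_add he hehat_le
        _ = t := add_halves _
    exact_mod_cast this
  have hsyndrome : H *ᵥ (e + ehat) = se + shat := by
    rw [mulVec_add, hehat, ← add_assoc, ← add_assoc, ZModModule.add_self, zero_add]
  have hshat_le : hammingNorm shat ≤ hammingNorm se :=
    hshat_min se ⟨e, he, by rw [add_assoc, ZModModule.add_self, add_zero]⟩
  calc (redW A (e + ehat) : ℝ) ≤ f (hammingNorm (se + shat)) := hsyndrome ▸ hconf _ hsum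
    _ ≤ f (2 * hammingNorm se) := hf (by have := hammingNorm_add_le se shat; omega)

theorem shadow_decoder_residual
    {m n a : ℕ}
    (H : Matrix (Fin m) (Fin n) (ZMod 2))
    (A : Matrix (Fin a) (Fin n) (ZMod 2))
    (hHA : H * Aᵀ = 0)
    (t : ℕ) (ht : 0 < t) (f : ℕ → ℝ) (hf : Monotone f)
    (hconf : Confined t f H A)
    (e : Fin n → ZMod 2) (he : (redW A e : ℝ) ≤ (t : ℝ) / 2)
    (se : Fin m → ZMod 2)
    (shat : Fin m → ZMod 2)
    (hshat_ex : ∃ e', (redW A e' : ℝ) ≤ (t : ℝ) / 2 ∧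
      H.mulVec e' = H.mulVec e + se + shat)
    (hshat_min : ∀ s' : Fin m → ZMod 2,
      (∃ e', (redW A e' : ℝ) ≤ (t : ℝ) / 2 ∧ H.mulVec e' = H.mulVec e + se + s') →
      hammingNorm shat ≤ hammingNorm s')
    (ehat : Fin n → ZMod 2)
    (hehat : H.mulVec ehat = H.mulVec e + se + shat)
    (hehat_min : ∀ e' : Fin n → ZMod 2,
      H.mulVec e' = H.mulVec e + se + shat → hammingNorm ehat ≤ hammingNorm e') :
    (redW A (e + ehat) : ℝ) ≤ f (2 * hammingNorm se) :=
  shadow_decoder_residual_general H A hHA t f hf hconf e he se shat hshat_ex hshat_min ehat hehat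
    hehat_min
end

section
/- Distances of the thickened code: Let H_X ∈ 𝔽₂^{m_X×n} and H_Z ∈ 𝔽₂^{m_Z×n} satisfy H_X·H_Zᵀ = 0, and assume there exists v ∈ ker H_X with v ∉ rs(H_Z) and there exists w ∈ ker H_Z with w ∉ rs(H_X). Define d_Z = min{ |v| : v ∈ ker H_X, v ∉ rs(H_Z) } and d_X = min{ |w| : w ∈ ker H_Z, w ∉ rs(H_X) }. Then for every ℓ ≥ 2, the thickened code satisfies min{ |ṽ| : ṽ ∈ ker H̃_X, ṽ ∉ rs(H̃_Z) } = d_Z and min{ |w̃| : w̃ ∈ ker H̃_Z, w̃ ∉ rs(H̃_X) } = ℓ·d_X. -/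
open Matrix Kronecker

/-! Write a vector on the thickened qubits as a pair `(X, Y)`, where row `τ` of `X` is the `τ`-th
copy ("sheet") of the original qubits. Then `H̃_X (X, Y) = X H_Xᵀ + hᵀ Y`,
`H̃_Z (X, Y) = (X H_Zᵀ, h X + Y H_X)`, `rs H̃_Z = {(A H_Z + hᵀ B, B H_Xᵀ)}` and
`rs H̃_X = {(C H_X, h C)}`. The matrix `U σ τ = [σ < τ]` satisfies `U hᵀ = 1` and
`hᵀ U = 1 + e₀ 1ᵀ`, and with it one cleans logical operators: an element of `ker H̃_X` lies in
`rs H̃_Z` iff the sum of its sheets lies in `rs H_Z`, and an element of `ker H̃_Z` lies in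
`rs H̃_X` iff any one of its sheets lies in `rs H_X`. Hence summing the sheets turns a thickened
Z-logical into a Z-logical of no larger weight and every sheet of a thickened X-logical is an
X-logical; conversely a Z-logical put on one sheet, or an X-logical copied onto all `ℓ` sheets,
is a thickened logical of weight `|v|`, resp. `ℓ |w|`. -/

lemma Nat.sInf_eq_of_forall_exists_le {S T : Set ℕ} {f : ℕ → ℕ} (hf : Monotone f)
    (hf0 : f 0 = 0) (hST : ∀ s ∈ S, f s ∈ T) (hTS : ∀ t ∈ T, ∃ s ∈ S, f s ≤ t) :
    sInf T = f (sInf S) := by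
  rcases S.eq_empty_or_nonempty with rfl | hS
  · have hT : T = ∅ := Set.eq_empty_of_forall_notMem fun t ht => by
      obtain ⟨s, hs, -⟩ := hTS t ht
      exact hs
    rw [hT, Nat.sInf_empty, hf0]
  · have hT : f (sInf S) ∈ T := hST _ (Nat.sInf_mem hS)
    obtain ⟨s, hs, hst⟩ := hTS _ (Nat.sInf_mem ⟨_, hT⟩)
    exact le_antisymm (Nat.sInf_le hT) ((hf (Nat.sInf_le hs)).trans hst)

section Hamming

variable {ι κ R : Type*} [Fintype ι] [Fintype κ] [DecidableEq R]

lemma hammingNorm_sumElim [Zero R] (f : ι → R) (g : κ → R) :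
    hammingNorm (Sum.elim f g) = hammingNorm f + hammingNorm g := by
  simp only [hammingNorm, Finset.card_filter, Fintype.sum_sum_type, Sum.elim_inl, Sum.elim_inr]
  rfl

lemma hammingNorm_vec [Zero R] (X : Matrix κ ι R) :
    hammingNorm (vec X) = ∑ k, hammingNorm (X k) := by
  simp only [hammingNorm, Finset.card_filter]
  rw [Fintype.sum_prod_type, Finset.sum_comm]
  rfl

lemma hammingNorm_add_le_s13 [AddZeroClass R] (x y : ι → R) :
    hammingNorm (x + y) ≤ hammingNorm x + hammingNorm y := by
  classical
  refine (Finset.card_le_card fun i hi => ?_).trans (Finset.card_union_le _ _)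
  simp only [Finset.mem_filter, Finset.mem_univ, true_and, Finset.mem_union, Pi.add_apply] at hi ⊢
  by_contra! h
  simp [h.1, h.2] at hi

lemma hammingNorm_sum_le [AddCommMonoid R] {γ : Type*} (s : Finset γ) (f : γ → ι → R) :
    hammingNorm (∑ c ∈ s, f c) ≤ ∑ c ∈ s, hammingNorm (f c) := by
  classical
  induction s using Finset.induction_on with
  | empty => simp
  | insert a s ha ih =>
    rw [Finset.sum_insert ha, Finset.sum_insert ha]
    exact (hammingNorm_add_le_s13 _ _).trans (Nat.add_le_add_left ih _)

end Hamming

section RowSpace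

variable {l m k : Type*} [Fintype m] (A : Matrix m k (ZMod 2))

lemma mem_rowSpace_iff_exists_vecMul {v : k → ZMod 2} : v ∈ rowSpace A ↔ ∃ c, c ᵥ* A = v := by
  simp only [vecMul_eq_sum]
  exact Submodule.mem_span_range_iff_exists_fun _

lemma mul_row_mem_rowSpace (C : Matrix l m (ZMod 2)) (i : l) : (C * A) i ∈ rowSpace A :=
  (mem_rowSpace_iff_exists_vecMul A).2 ⟨C i, rfl⟩

lemma forall_row_mem_rowSpace_iff {X : Matrix l k (ZMod 2)} :
    (∀ i, X i ∈ rowSpace A) ↔ ∃ C : Matrix l m (ZMod 2), C * A = X := by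
  refine ⟨fun h => ?_, fun ⟨C, hC⟩ i => hC ▸ mul_row_mem_rowSpace A C i⟩
  choose c hc using fun i => (mem_rowSpace_iff_exists_vecMul A).1 (h i)
  exact ⟨of c, funext hc⟩

end RowSpace

section RepetitionCode

variable (ℓ : ℕ)

def repPrimitive : Matrix (Fin (ℓ - 1)) (Fin ℓ) (ZMod 2) :=
  of fun σ τ => if σ.val < τ.val then 1 else 0

lemma Fin.sum_ite_val_eq {M : Type*} [AddCommMonoid M] (k : ℕ) (f : Fin ℓ → M) :
    ∑ σ : Fin ℓ, (if σ.val = k then f σ else 0) = if h : k < ℓ then f ⟨k, h⟩ else 0 := by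
  split_ifs with h
  · rw [Fintype.sum_eq_single ⟨k, h⟩ fun σ hσ => if_neg fun h' => hσ (Fin.ext h')]
    simp
  · exact Finset.sum_eq_zero fun σ _ => if_neg fun (h' : σ.val = k) => h (h' ▸ σ.2)

lemma repH_mulVec_one : repH ℓ *ᵥ 1 = 0 := by
  ext σ
  simp only [mulVec, dotProduct, repH, of_apply, Pi.one_apply, mul_one, Pi.zero_apply]
  have : ∀ τ : Fin ℓ, (if τ.val = σ.val ∨ τ.val = σ.val + 1 then (1 : ZMod 2) else 0) =
      (if τ.val = σ.val then 1 else 0) + (if τ.val = σ.val + 1 then 1 else 0) := by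
    intro τ; split_ifs <;> first | omega | simp
  simp only [this, Finset.sum_add_distrib, Fin.sum_ite_val_eq]
  have := σ.2
  split_ifs <;> first | omega | decide

lemma repPrimitive_mul_repH_transpose : repPrimitive ℓ * (repH ℓ)ᵀ = 1 := by
  ext σ σ'
  simp only [mul_apply, transpose_apply, repPrimitive, repH, of_apply, one_apply, Fin.ext_iff]
  have : ∀ τ : Fin ℓ, ((if σ.val < τ.val then (1 : ZMod 2) else 0) *
      if τ.val = σ'.val ∨ τ.val = σ'.val + 1 then 1 else 0) =
      (if τ.val = σ'.val then (if σ.val < σ'.val then 1 else 0) else 0) +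
      (if τ.val = σ'.val + 1 then (if σ.val < σ'.val + 1 then 1 else 0) else 0) := by
    intro τ; split_ifs <;> first | omega | simp
  simp only [this, Finset.sum_add_distrib, Fin.sum_ite_val_eq]
  have := σ.2; have := σ'.2
  split_ifs <;> first | omega | decide

lemma repH_transpose_mul_repPrimitive :
    (repH ℓ)ᵀ * repPrimitive ℓ = 1 + vecMulVec (fun τ => if τ.val = 0 then 1 else 0) 1 := by
  ext τ τ'
  simp only [mul_apply, transpose_apply, repPrimitive, repH, of_apply, one_apply, Fin.ext_iff,
    Matrix.add_apply, vecMulVec_apply, Pi.one_apply, mul_one]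
  have : ∀ σ : Fin (ℓ - 1), ((if τ.val = σ.val ∨ τ.val = σ.val + 1 then (1 : ZMod 2) else 0) *
      if σ.val < τ'.val then 1 else 0) =
      (if σ.val = τ.val then (if τ.val < τ'.val then 1 else 0) else 0) +
      (if σ.val = τ.val - 1 then (if τ.val ≠ 0 ∧ τ.val < τ'.val + 1 then 1 else 0) else 0) := by
    intro σ; split_ifs <;> first | omega | simp
  simp only [this, Finset.sum_add_distrib, Fin.sum_ite_val_eq]
  have := τ.2; have := τ'.2
  split_ifs <;> first | omega | decide

end RepetitionCode

lemma row_add_row_mem_rowSpace {ℓ : ℕ} {m k : Type*} [Fintype m] {M : Matrix m k (ZMod 2)}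
    {X : Matrix (Fin ℓ) k (ZMod 2)} {Y : Matrix (Fin (ℓ - 1)) m (ZMod 2)}
    (h : repH ℓ * X = Y * M) (τ τ' : Fin ℓ) : X τ + X τ' ∈ rowSpace M := by
  set x₀ := (fun τ => if τ.val = 0 then 1 else 0) ᵥ* X
  have hrow : ∀ τ, ((repPrimitive ℓ)ᵀ * Y * M) τ = X τ + x₀ := fun τ => by
    rw [Matrix.mul_assoc, ← h, ← Matrix.mul_assoc, ← transpose_transpose (repH ℓ), ← transpose_mul,
      repH_transpose_mul_repPrimitive, transpose_add, transpose_one, transpose_vecMulVec,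
      Matrix.add_mul, Matrix.one_mul, vecMulVec_mul]
    ext j
    simp [x₀]
  have := Submodule.add_mem _ (mul_row_mem_rowSpace M ((repPrimitive ℓ)ᵀ * Y) τ)
    (mul_row_mem_rowSpace M ((repPrimitive ℓ)ᵀ * Y) τ')
  rwa [hrow, hrow, add_comm (X τ'), ZModModule.add_add_add_cancel] at this

lemma exists_eq_sumElim_vec {R α β γ δ : Type*} (v : (α × β) ⊕ (γ × δ) → R) :
    ∃ (X : Matrix β α R) (Y : Matrix δ γ R), v = Sum.elim (vec X) (vec Y) :=
  ⟨of fun b a => v (.inl (a, b)), of fun d c => v (.inr (c, d)),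
    funext fun x => by rcases x with ⟨_, _⟩ | ⟨_, _⟩ <;> rfl⟩

section Thickened

variable {mX mZ n ℓ : ℕ} (HX : Matrix (Fin mX) (Fin n) (ZMod 2))
  (HZ : Matrix (Fin mZ) (Fin n) (ZMod 2))
  {X : Matrix (Fin ℓ) (Fin n) (ZMod 2)} {Y : Matrix (Fin (ℓ - 1)) (Fin mX) (ZMod 2)}

lemma thickHX_mulVec_eq_zero_iff :
    thickHX HX ℓ *ᵥ Sum.elim (vec X) (vec Y) = 0 ↔ X * HXᵀ = (repH ℓ)ᵀ * Y := by
  rw [thickHX, fromCols_mulVec_sumElim, kronecker_mulVec_vec, kronecker_mulVec_vec]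
  simp only [transpose_one, Matrix.one_mul, Matrix.mul_one, ← vec_add, vec_eq_zero_iff,
    add_eq_zero_iff_eq_neg, ZModModule.neg_eq_self]

lemma thickHZ_mulVec_eq_zero_iff :
    thickHZ HX HZ ℓ *ᵥ Sum.elim (vec X) (vec Y) = 0 ↔ X * HZᵀ = 0 ∧ repH ℓ * X = Y * HX := by
  rw [thickHZ, fromBlocks_mulVec, Sum.elim_comp_inl, Sum.elim_comp_inr, ← Sum.elim_zero_zero,
    Sum.elim_eq_iff]
  simp only [kronecker_mulVec_vec, transpose_one, Matrix.one_mul, Matrix.mul_one, zero_mulVec,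
    add_zero, ← vec_add, vec_eq_zero_iff, add_eq_zero_iff_eq_neg, ZModModule.neg_eq_self,
    transpose_transpose]

lemma sumElim_vec_mem_rowSpace_thickHZ_iff :
    Sum.elim (vec X) (vec Y) ∈ rowSpace (thickHZ HX HZ ℓ) ↔
      ∃ (A : Matrix (Fin ℓ) (Fin mZ) (ZMod 2)) (B : Matrix (Fin (ℓ - 1)) (Fin n) (ZMod 2)),
        A * HZ + (repH ℓ)ᵀ * B = X ∧ B * HXᵀ = Y := by
  rw [mem_rowSpace_iff_exists_vecMul]
  constructor
  · rintro ⟨c, hc⟩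
    obtain ⟨A, B, rfl⟩ := exists_eq_sumElim_vec c
    simp only [thickHZ, vecMul_fromBlocks, Sum.elim_comp_inl, Sum.elim_comp_inr,
      vec_vecMul_kronecker, vecMul_zero, zero_add, transpose_one, Matrix.one_mul, Matrix.mul_one,
      ← vec_add, Sum.elim_eq_iff, vec_inj] at hc
    exact ⟨A, B, hc⟩
  · rintro ⟨A, B, rfl, rfl⟩
    exact ⟨Sum.elim (vec A) (vec B), by simp [thickHZ, vecMul_fromBlocks, vec_vecMul_kronecker]⟩

lemma sumElim_vec_mem_rowSpace_thickHX_iff :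
    Sum.elim (vec X) (vec Y) ∈ rowSpace (thickHX HX ℓ) ↔
      ∃ C : Matrix (Fin ℓ) (Fin mX) (ZMod 2), C * HX = X ∧ repH ℓ * C = Y := by
  rw [mem_rowSpace_iff_exists_vecMul]
  constructor
  · rintro ⟨c, hc⟩
    obtain ⟨C, rfl⟩ : ∃ C : Matrix (Fin ℓ) (Fin mX) (ZMod 2), c = vec C :=
      ⟨of fun τ a => c (a, τ), rfl⟩
    simp only [thickHX, vecMul_fromCols, vec_vecMul_kronecker, transpose_one, transpose_transpose,
      Matrix.one_mul, Matrix.mul_one, Sum.elim_eq_iff, vec_inj] at hc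
    exact ⟨C, hc⟩
  · rintro ⟨C, rfl, rfl⟩
    exact ⟨vec C, by simp [thickHX, vecMul_fromCols, vec_vecMul_kronecker]⟩

theorem mem_rowSpace_thickHZ_iff_one_vecMul_mem (hker : X * HXᵀ = (repH ℓ)ᵀ * Y) :
    Sum.elim (vec X) (vec Y) ∈ rowSpace (thickHZ HX HZ ℓ) ↔ 1 ᵥ* X ∈ rowSpace HZ := by
  rw [sumElim_vec_mem_rowSpace_thickHZ_iff, mem_rowSpace_iff_exists_vecMul]
  constructor
  · rintro ⟨A, B, rfl, -⟩
    refine ⟨1 ᵥ* A, ?_⟩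
    rw [vecMul_add, ← vecMul_vecMul, ← vecMul_vecMul, vecMul_transpose, repH_mulVec_one,
      zero_vecMul, add_zero]
  · rintro ⟨c, hc⟩
    refine ⟨vecMulVec (fun τ => if τ.val = 0 then 1 else 0) c, repPrimitive ℓ * X, ?_, ?_⟩
    · rw [vecMulVec_mul, hc, ← Matrix.mul_assoc, repH_transpose_mul_repPrimitive, Matrix.add_mul,
        Matrix.one_mul, vecMulVec_mul, add_left_comm, ZModModule.add_self, add_zero]
    · rw [Matrix.mul_assoc, hker, ← Matrix.mul_assoc, repPrimitive_mul_repH_transpose,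
        Matrix.one_mul]

theorem mem_rowSpace_thickHX_iff_row_mem (hker : repH ℓ * X = Y * HX) (τ : Fin ℓ) :
    Sum.elim (vec X) (vec Y) ∈ rowSpace (thickHX HX ℓ) ↔ X τ ∈ rowSpace HX := by
  rw [sumElim_vec_mem_rowSpace_thickHX_iff]
  constructor
  · rintro ⟨C, rfl, -⟩
    exact mul_row_mem_rowSpace HX C τ
  · intro hτ
    have hrows : ∀ τ', X τ' ∈ rowSpace HX := fun τ' => by
      simpa [← add_assoc, ZModModule.add_self] using
        Submodule.add_mem _ hτ (row_add_row_mem_rowSpace hker τ τ')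
    obtain ⟨C, hC⟩ := (forall_row_mem_rowSpace_iff HX).1 hrows
    refine ⟨C + (repPrimitive ℓ)ᵀ * (Y + repH ℓ * C), ?_, ?_⟩
    · rw [Matrix.add_mul, Matrix.mul_assoc, Matrix.add_mul, Matrix.mul_assoc, hC, ← hker,
        ZModModule.add_self, Matrix.mul_zero, add_zero]
    · rw [Matrix.mul_add, ← Matrix.mul_assoc, ← transpose_transpose (repH ℓ), ← transpose_mul,
        repPrimitive_mul_repH_transpose, transpose_one, Matrix.one_mul, transpose_transpose,
        add_left_comm, ZModModule.add_self, add_zero]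

end Thickened

section Logicals

variable {mX mZ n ℓ : ℕ} (HX : Matrix (Fin mX) (Fin n) (ZMod 2))
  (HZ : Matrix (Fin mZ) (Fin n) (ZMod 2))

theorem exists_thickHX_logical_of_logical {v : Fin n → ZMod 2} (hv : HX *ᵥ v = 0)
    (hvHZ : v ∉ rowSpace HZ) (τ : Fin ℓ) :
    ∃ v', thickHX HX ℓ *ᵥ v' = 0 ∧ v' ∉ rowSpace (thickHZ HX HZ ℓ) ∧
      hammingNorm v' = hammingNorm v := by
  set X := vecMulVec (Pi.single τ 1) v
  have hker : X * HXᵀ = (repH ℓ)ᵀ * (0 : Matrix (Fin (ℓ - 1)) (Fin mX) (ZMod 2)) := by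
    rw [vecMulVec_mul, vecMul_transpose, hv, Matrix.mul_zero]
    ext; simp [vecMulVec_apply]
  have hsum : 1 ᵥ* X = v := by simp [X, vecMul_vecMulVec]
  refine ⟨Sum.elim (vec X) (vec 0), (thickHX_mulVec_eq_zero_iff HX).2 hker, ?_, ?_⟩
  · rwa [mem_rowSpace_thickHZ_iff_one_vecMul_mem HX HZ hker, hsum]
  · have hrow : ∀ τ', X τ' = if τ' = τ then v else 0 := fun τ' => by
      ext; by_cases h : τ' = τ <;> simp [X, vecMulVec_apply, h]
    simp [hammingNorm_sumElim, hammingNorm_vec, hrow, apply_ite]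

theorem exists_logical_of_thickHX_logical {v' : (Fin n × Fin ℓ) ⊕ (Fin mX × Fin (ℓ - 1)) → ZMod 2}
    (hv' : thickHX HX ℓ *ᵥ v' = 0) (hv'HZ : v' ∉ rowSpace (thickHZ HX HZ ℓ)) :
    ∃ v, HX *ᵥ v = 0 ∧ v ∉ rowSpace HZ ∧ hammingNorm v ≤ hammingNorm v' := by
  obtain ⟨X, Y, rfl⟩ := exists_eq_sumElim_vec v'
  rw [thickHX_mulVec_eq_zero_iff] at hv'
  refine ⟨1 ᵥ* X, ?_, (mem_rowSpace_thickHZ_iff_one_vecMul_mem HX HZ hv').not.1 hv'HZ, ?_⟩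
  · rw [← vecMul_transpose, vecMul_vecMul, hv', ← vecMul_vecMul, vecMul_transpose,
      repH_mulVec_one, zero_vecMul]
  · rw [hammingNorm_sumElim, hammingNorm_vec, vecMul_eq_sum]
    simp only [Pi.one_apply, one_smul]
    exact (hammingNorm_sum_le _ _).trans (Nat.le_add_right _ _)

theorem exists_thickHZ_logical_of_logical {w : Fin n → ZMod 2} (hw : HZ *ᵥ w = 0)
    (hwHX : w ∉ rowSpace HX) (hℓ : 0 < ℓ) :
    ∃ w', thickHZ HX HZ ℓ *ᵥ w' = 0 ∧ w' ∉ rowSpace (thickHX HX ℓ) ∧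
      hammingNorm w' = ℓ * hammingNorm w := by
  set X : Matrix (Fin ℓ) (Fin n) (ZMod 2) := vecMulVec 1 w
  have hker : repH ℓ * X = (0 : Matrix (Fin (ℓ - 1)) (Fin mX) (ZMod 2)) * HX := by
    rw [mul_vecMulVec, repH_mulVec_one, Matrix.zero_mul]
    ext; simp
  have hrow : ∀ τ, X τ = w := fun τ => by ext; simp [X]
  refine ⟨Sum.elim (vec X) (vec 0), (thickHZ_mulVec_eq_zero_iff HX HZ).2 ⟨?_, hker⟩, ?_, ?_⟩
  · rw [vecMulVec_mul, vecMul_transpose, hw]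
    ext; simp
  · rwa [mem_rowSpace_thickHX_iff_row_mem HX hker ⟨0, hℓ⟩, hrow]
  · simp [hammingNorm_sumElim, hammingNorm_vec, hrow]

theorem exists_logical_of_thickHZ_logical (hℓ : 0 < ℓ)
    {w' : (Fin n × Fin ℓ) ⊕ (Fin mX × Fin (ℓ - 1)) → ZMod 2}
    (hw' : thickHZ HX HZ ℓ *ᵥ w' = 0) (hw'HX : w' ∉ rowSpace (thickHX HX ℓ)) :
    ∃ w, HZ *ᵥ w = 0 ∧ w ∉ rowSpace HX ∧ ℓ * hammingNorm w ≤ hammingNorm w' := by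
  obtain ⟨X, Y, rfl⟩ := exists_eq_sumElim_vec w'
  obtain ⟨hZ, hrep⟩ := (thickHZ_mulVec_eq_zero_iff HX HZ).1 hw'
  obtain ⟨τ, -, hτ⟩ := Finset.exists_min_image Finset.univ (fun τ => hammingNorm (X τ))
    ⟨⟨0, hℓ⟩, Finset.mem_univ _⟩
  refine ⟨X τ, ?_, (mem_rowSpace_thickHX_iff_row_mem HX hrep τ).not.1 hw'HX, ?_⟩
  · rw [← vecMul_transpose, ← mul_apply_eq_vecMul, hZ]
    rfl
  · calc ℓ * hammingNorm (X τ) = ∑ _τ' : Fin ℓ, hammingNorm (X τ) := by simp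
      _ ≤ ∑ τ', hammingNorm (X τ') := Finset.sum_le_sum fun τ' _ => hτ τ' (Finset.mem_univ _)
      _ ≤ hammingNorm (Sum.elim (vec X) (vec Y)) := by
        rw [hammingNorm_sumElim, hammingNorm_vec]
        exact Nat.le_add_right _ _

end Logicals

theorem thick_distances_general
    {mX mZ n : ℕ}
    (HX : Matrix (Fin mX) (Fin n) (ZMod 2))
    (HZ : Matrix (Fin mZ) (Fin n) (ZMod 2))
    (dZ dX : ℕ)
    (hdZ : dZ = sInf {k : ℕ | ∃ v : Fin n → ZMod 2,
      HX.mulVec v = 0 ∧ v ∉ rowSpace HZ ∧ hammingNorm v = k})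
    (hdX : dX = sInf {k : ℕ | ∃ w : Fin n → ZMod 2,
      HZ.mulVec w = 0 ∧ w ∉ rowSpace HX ∧ hammingNorm w = k})
    (ℓ : ℕ) (hℓ : 2 ≤ ℓ) :
    sInf {k : ℕ | ∃ v : (Fin n × Fin ℓ) ⊕ (Fin mX × Fin (ℓ - 1)) → ZMod 2,
      (thickHX HX ℓ).mulVec v = 0 ∧ v ∉ rowSpace (thickHZ HX HZ ℓ) ∧
      hammingNorm v = k} = dZ ∧
    sInf {k : ℕ | ∃ w : (Fin n × Fin ℓ) ⊕ (Fin mX × Fin (ℓ - 1)) → ZMod 2,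
      (thickHZ HX HZ ℓ).mulVec w = 0 ∧ w ∉ rowSpace (thickHX HX ℓ) ∧
      hammingNorm w = k} = ℓ * dX := by
  have hℓ₀ : 0 < ℓ := by omega
  subst hdZ hdX
  constructor
  · refine Nat.sInf_eq_of_forall_exists_le monotone_id rfl ?_ ?_
    · rintro _ ⟨v, hv, hvHZ, rfl⟩
      exact exists_thickHX_logical_of_logical HX HZ hv hvHZ ⟨0, hℓ₀⟩
    · rintro _ ⟨v', hv', hv'HZ, rfl⟩
      obtain ⟨v, hv, hvHZ, hle⟩ := exists_logical_of_thickHX_logical HX HZ hv' hv'HZ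
      exact ⟨_, ⟨v, hv, hvHZ, rfl⟩, hle⟩
  · refine Nat.sInf_eq_of_forall_exists_le (fun _ _ => Nat.mul_le_mul_left ℓ) (mul_zero ℓ) ?_ ?_
    · rintro _ ⟨w, hw, hwHX, rfl⟩
      exact exists_thickHZ_logical_of_logical HX HZ hw hwHX hℓ₀
    · rintro _ ⟨w', hw', hw'HX, rfl⟩
      obtain ⟨w, hw, hwHX, hle⟩ := exists_logical_of_thickHZ_logical HX HZ hℓ₀ hw' hw'HX
      exact ⟨_, ⟨w, hw, hwHX, rfl⟩, hle⟩

theorem thick_distances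
    {mX mZ n : ℕ}
    (HX : Matrix (Fin mX) (Fin n) (ZMod 2))
    (HZ : Matrix (Fin mZ) (Fin n) (ZMod 2))
    (hCSS : HX * HZᵀ = 0)
    (hexZ : ∃ v : Fin n → ZMod 2, HX.mulVec v = 0 ∧ v ∉ rowSpace HZ)
    (hexX : ∃ w : Fin n → ZMod 2, HZ.mulVec w = 0 ∧ w ∉ rowSpace HX)
    (dZ dX : ℕ)
    (hdZ : dZ = sInf {k : ℕ | ∃ v : Fin n → ZMod 2,
      HX.mulVec v = 0 ∧ v ∉ rowSpace HZ ∧ hammingNorm v = k})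
    (hdX : dX = sInf {k : ℕ | ∃ w : Fin n → ZMod 2,
      HZ.mulVec w = 0 ∧ w ∉ rowSpace HX ∧ hammingNorm w = k})
    (ℓ : ℕ) (hℓ : 2 ≤ ℓ) :
    sInf {k : ℕ | ∃ v : (Fin n × Fin ℓ) ⊕ (Fin mX × Fin (ℓ - 1)) → ZMod 2,
      (thickHX HX ℓ).mulVec v = 0 ∧ v ∉ rowSpace (thickHZ HX HZ ℓ) ∧
      hammingNorm v = k} = dZ ∧
    sInf {k : ℕ | ∃ w : (Fin n × Fin ℓ) ⊕ (Fin mX × Fin (ℓ - 1)) → ZMod 2,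
      (thickHZ HX HZ ℓ).mulVec w = 0 ∧ w ∉ rowSpace (thickHX HX ℓ) ∧
      hammingNorm w = k} = ℓ * dX :=
  thick_distances_general HX HZ dZ dX hdZ hdX ℓ hℓ
end
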